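/- In a free product G = A * B, for nontrivial elements a, a′ ∈ A, a is conjugate to a′ in G if and only if a is conjugate to a′ in A. -/

import Mathlib

open Monoid

namespace FreeProductConjAux

variable {ι : Type*} {G : ι → Type*} [∀ i, Group (G i)]

open Monoid.CoprodI

/-- Word.prod is injective. -/
theorem word_prod_injective [DecidableEq ι] [∀ i, DecidableEq (G i)]
    {w₁ w₂ : Word G} (h : Word.prod w₁ = Word.prod w₂) : w₁ = w₂ :=
  (Word.equiv (M := G)).symm.injective h

theorem neword_toList_length_pos {i j} (w : NeWord G i j) : 0 < w.toList.length :=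
  List.length_pos_iff.2 w.toList_ne_nil

/-- Key lemma: if a word conjugates `of a` into `of a'` (both in factor `i`), then
`a` and `a'` are conjugate in `G i`. -/
theorem key (w : Word G) : ∀ (i : ι) (a a' : G i), a ≠ 1 → a' ≠ 1 →
    (Word.prod w)⁻¹ * of a * Word.prod w = of a' → IsConj a a' := by
  classical
  induction w using Word.consRecOn with
  | empty =>
    intro i a a' ha ha' h
    simp only [Word.prod_empty, inv_one, one_mul, mul_one] at h
    exact (of_injective i h) ▸ IsConj.refl a
  | cons j m w h1 h2 ih =>
    intro i a a' ha ha' h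
    rw [Word.prod_cons, mul_inv_rev, ← map_inv] at h
    by_cases hij : j = i
    · subst hij
      have hm : (m⁻¹ * a * m) ≠ 1 := by
        intro hc
        apply ha
        have := congrArg (fun x => m * x * m⁻¹) hc
        simpa [mul_assoc] using this
      have heq : (Word.prod w)⁻¹ * of (m⁻¹ * a * m) * Word.prod w = of a' := by
        rw [← h]
        simp [map_mul, mul_assoc]
      have := ih j (m⁻¹ * a * m) a' hm ha' heq
      exact (IsConj.trans ⟨⟨m⁻¹, m, by simp, by simp⟩, by
        show m⁻¹ * a = (m⁻¹ * a * m) * m⁻¹; group⟩ this)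
    · -- contradiction: the left-hand side is a reduced word of length ≥ 3
      exfalso
      have hji : j ≠ i := hij
      have hij' : i ≠ j := Ne.symm hij
      have hm1 : m⁻¹ ≠ 1 := inv_ne_one.2 h2
      -- core NeWord : of m⁻¹ * of a * of m
      set core : NeWord G j j :=
        NeWord.append (NeWord.append (NeWord.singleton m⁻¹ hm1) hji (NeWord.singleton a ha))
          hij' (NeWord.singleton m h2) with hcore
      have hcore_prod : core.prod = of m⁻¹ * of a * of m := by
        simp [hcore]
      by_cases hw : w = Word.empty
      · subst hw
        have hprod : core.prod = of a' := by
          rw [hcore_prod, ← h]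
          simp
        have : core.toWord = (NeWord.singleton a' ha').toWord :=
          word_prod_injective hprod
        have hlen := congrArg (fun u : Word G => u.toList.length) this
        simp [NeWord.toWord, hcore] at hlen
      · obtain ⟨k, l, w', hw'⟩ := NeWord.of_word w hw
        have hk : k ≠ j := by
          intro hkj
          apply h1
          have : w.toList.head? = some ⟨k, w'.head⟩ := by
            rw [← hw']; exact w'.toList_head?
          simp [Word.fstIdx, this, hkj]
        have hw'prod : w'.prod = Word.prod w := by rw [NeWord.prod, hw']
        set W : NeWord G l l :=
          NeWord.append (NeWord.append w'.inv hk core) (Ne.symm hk) w' with hW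
        have hWprod : W.prod = of a' := by
          rw [← h, hW]
          simp only [NeWord.append_prod, NeWord.inv_prod, hcore_prod, hw'prod]
          group
        have : W.toWord = (NeWord.singleton a' ha').toWord :=
          word_prod_injective hWprod
        have hlen := congrArg (fun u : Word G => u.toList.length) this
        have h3 := neword_toList_length_pos w'
        have h4 := neword_toList_length_pos w'.inv
        simp [NeWord.toWord, hW, hcore] at hlen
        omega

end FreeProductConjAux

section Transfer

universe u v
variable {A : Type u} {B : Type v} [Group A] [Group B]

/-- The family of groups indexed by `Bool`. -/
abbrev FreeProductConjAux.fam (A : Type u) (B : Type v) : Bool → Type (max u v) :=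
  fun b => cond b (ULift A) (ULift B)

instance : ∀ b, Group (FreeProductConjAux.fam A B b)
  | true => inferInstanceAs (Group (ULift A))
  | false => inferInstanceAs (Group (ULift B))

/-- The canonical hom `A ∗ B →* CoprodI (fam A B)`. -/
def FreeProductConjAux.toI : Monoid.Coprod A B →* Monoid.CoprodI (FreeProductConjAux.fam A B) :=
  Monoid.Coprod.lift
    ((Monoid.CoprodI.of (M := FreeProductConjAux.fam A B) (i := true)).comp
      (MulEquiv.ulift (α := A)).symm.toMonoidHom)
    ((Monoid.CoprodI.of (M := FreeProductConjAux.fam A B) (i := false)).comp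
      (MulEquiv.ulift (α := B)).symm.toMonoidHom)

theorem FreeProductConjAux.toI_inl (a : A) :
    (FreeProductConjAux.toI (B := B) (Monoid.Coprod.inl a)) =
      Monoid.CoprodI.of (M := FreeProductConjAux.fam A B) (i := true) (ULift.up a) :=
  Monoid.Coprod.lift_apply_inl _ _ _

end Transfer

/-- In a free product `A ∗ B`, two nontrivial elements `a, a'` of the factor `A` are
conjugate in `A ∗ B` if and only if they are conjugate in `A`. -/
theorem free_product_conj_in_factor_iff
    {A B : Type*} [Group A] [Group B] (a a' : A) (ha : a ≠ 1) (ha' : a' ≠ 1) :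
    IsConj (Monoid.Coprod.inl a : Monoid.Coprod A B) (Monoid.Coprod.inl a') ↔
      IsConj a a' := by
  classical
  constructor
  · intro h
    have h2 : IsConj
        (Monoid.CoprodI.of (M := FreeProductConjAux.fam A B) (i := true) (ULift.up a))
        (Monoid.CoprodI.of (M := FreeProductConjAux.fam A B) (i := true) (ULift.up a')) := by
      have := (FreeProductConjAux.toI (A := A) (B := B)).map_isConj h
      rwa [FreeProductConjAux.toI_inl, FreeProductConjAux.toI_inl] at this
    rw [isConj_iff] at h2
    obtain ⟨c, hc⟩ := h2
    have hau : (ULift.up a : ULift A) ≠ 1 := fun hc1 => ha (congrArg ULift.down hc1)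
    have hau' : (ULift.up a' : ULift A) ≠ 1 := fun hc1 => ha' (congrArg ULift.down hc1)
    have hkey : IsConj (ULift.up a : FreeProductConjAux.fam A B true) (ULift.up a') := by
      refine FreeProductConjAux.key (Monoid.CoprodI.Word.equiv c⁻¹) true _ _ hau hau' ?_
      have hprod : Monoid.CoprodI.Word.prod (Monoid.CoprodI.Word.equiv c⁻¹) = c⁻¹ :=
        (Monoid.CoprodI.Word.equiv).left_inv c⁻¹
      rw [hprod]
      simpa [mul_assoc] using hc
    have := (MulEquiv.ulift (α := A)).toMonoidHom.map_isConj hkey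
    exact this
  · intro h
    exact (Monoid.Coprod.inl : A →* Monoid.Coprod A B).map_isConj h
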